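/- The HOW function is differentiable on ℝ and its proximity displacement admits the closed form: for all x ∈ ℝ, x − l_{σ,c}'(x) = max{0, |x| − |x|·e^{(c²−x²)/σ²}}·sign(x); in particular this expression vanishes exactly when |x| ≤ c. -/

import Mathlib

/-!
Since `|x| ≤ c ↔ x² ≤ c²`, the HOW function is `x ↦ φ (x²)` for a profile `φ` with a single
break point `c²`, where both branches have slope `1/2`. Hence `l'(x) = x · min 1 e(x)` with
`e(x) = exp ((c² − x²)/σ²)`, and `x − l'(x) = x · max 0 (1 − e(x))`, which vanishes exactly
when `x = 0` or `e(x) ≥ 1`, i.e. when `|x| ≤ c`.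
-/

open Real Set

/-- The hybrid ordinary-Welsch (HOW) function with parameters `σ, c > 0`. -/
noncomputable def how (σ c x : ℝ) : ℝ :=
  if |x| ≤ c then x ^ 2 / 2
  else σ ^ 2 / 2 * (1 - Real.exp ((c ^ 2 - x ^ 2) / σ ^ 2)) + c ^ 2 / 2

theorem HasDerivAt.of_eqOn_Iic_of_eqOn_Ici {E : Type*} [NormedAddCommGroup E] [NormedSpace ℝ E]
    {f g h : ℝ → E} {a : ℝ} {f' : E} (hg : HasDerivAt g f' a) (hh : HasDerivAt h f' a)
    (hfg : EqOn f g (Iic a)) (hfh : EqOn f h (Ici a)) : HasDerivAt f f' a := by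
  have hleft := hg.hasDerivWithinAt.congr hfg (hfg self_mem_Iic)
  have hright := hh.hasDerivWithinAt.congr hfh (hfh self_mem_Ici)
  rw [← hasDerivWithinAt_univ, ← Iic_union_Ici (a := a)]
  exact hleft.union hright

theorem Real.abs_mul_sign (x : ℝ) : |x| * Real.sign x = x := by
  rcases lt_trichotomy x 0 with hx | rfl | hx
  · rw [abs_of_neg hx, Real.sign_of_neg hx]; ring
  · simp
  · rw [abs_of_pos hx, Real.sign_of_pos hx, mul_one]

theorem max_abs_sub_abs_mul_mul_sign (x e : ℝ) :
    max 0 (|x| - |x| * e) * Real.sign x = x * max 0 (1 - e) := by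
  have hfactor : max 0 (|x| * (1 - e)) = |x| * max 0 (1 - e) := by
    rw [mul_max_of_nonneg _ _ (abs_nonneg x), mul_zero]
  rw [← mul_one_sub, hfactor, mul_right_comm, Real.abs_mul_sign]

theorem one_le_exp_iff_abs_le {σ c x : ℝ} (hσ : σ ≠ 0) (hc : 0 ≤ c) :
    1 ≤ exp ((c ^ 2 - x ^ 2) / σ ^ 2) ↔ |x| ≤ c := by
  rw [one_le_exp_iff, le_div_iff₀ (by positivity), zero_mul, sub_nonneg, sq_le_sq,
    abs_of_nonneg hc]

noncomputable def howProfile (σ c t : ℝ) : ℝ :=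
  if t ≤ c ^ 2 then t / 2
  else σ ^ 2 / 2 * (1 - exp ((c ^ 2 - t) / σ ^ 2)) + c ^ 2 / 2

theorem how_eq_howProfile_sq {σ c : ℝ} (hc : 0 ≤ c) :
    how σ c = fun x => howProfile σ c (x ^ 2) := by
  funext x
  simp only [how, howProfile, sq_le_sq, abs_of_nonneg hc]

theorem hasDerivAt_welsch_branch {σ : ℝ} (hσ : σ ≠ 0) (c t : ℝ) :
    HasDerivAt (fun t => σ ^ 2 / 2 * (1 - exp ((c ^ 2 - t) / σ ^ 2)) + c ^ 2 / 2)
      (exp ((c ^ 2 - t) / σ ^ 2) / 2) t := by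
  have hexp := (((hasDerivAt_id' t).const_sub (c ^ 2)).div_const (σ ^ 2)).exp
  refine ((hexp.const_sub 1).const_mul (σ ^ 2 / 2)).add_const (c ^ 2 / 2) |>.congr_deriv ?_
  field_simp

theorem hasDerivAt_howProfile {σ : ℝ} (hσ : σ ≠ 0) (c t : ℝ) :
    HasDerivAt (howProfile σ c) (min 1 (exp ((c ^ 2 - t) / σ ^ 2)) / 2) t := by
  have hquad : ∀ s, HasDerivAt (fun t : ℝ => t / 2) (1 / 2) s := fun s =>
    (hasDerivAt_id s).div_const 2
  rcases lt_trichotomy t (c ^ 2) with ht | rfl | ht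
  · rw [min_eq_left (one_le_exp (div_nonneg (by linarith) (sq_nonneg σ)))]
    refine (hquad t).congr_of_eventuallyEq ?_
    filter_upwards [Iio_mem_nhds ht] with s hs
    exact if_pos (le_of_lt hs)
  · simp only [sub_self, zero_div, exp_zero, min_self]
    refine (hquad _).of_eqOn_Iic_of_eqOn_Ici
      ((hasDerivAt_welsch_branch hσ c (c ^ 2)).congr_deriv (by simp)) (fun s hs => if_pos hs)
      fun s hs => ?_
    rcases (mem_Ici.mp hs).eq_or_lt with rfl | hlt
    · simp [howProfile]
    · exact if_neg hlt.not_ge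
  · rw [min_eq_right (exp_le_one_iff.mpr (div_nonpos_of_nonpos_of_nonneg (by linarith)
      (sq_nonneg σ)))]
    refine (hasDerivAt_welsch_branch hσ c t).congr_of_eventuallyEq ?_
    filter_upwards [Ioi_mem_nhds ht] with s hs
    exact if_neg (not_le.mpr hs)

theorem hasDerivAt_how {σ c : ℝ} (hσ : σ ≠ 0) (hc : 0 ≤ c) (x : ℝ) :
    HasDerivAt (how σ c) (x * min 1 (exp ((c ^ 2 - x ^ 2) / σ ^ 2))) x := by
  rw [how_eq_howProfile_sq hc]
  refine (hasDerivAt_howProfile hσ c (x ^ 2)).comp x (hasDerivAt_pow 2 x) |>.congr_deriv ?_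
  ring

/-- The HOW function is differentiable on ℝ, its proximity
displacement `x − l'(x)` equals `max{0, |x| − |x|·e^{(c²−x²)/σ²}}·sign(x)`,
and this expression vanishes exactly when `|x| ≤ c`. -/
theorem how_differentiable_prox (σ c : ℝ) (hσ : 0 < σ) (hc : 0 < c) :
    (∀ x : ℝ, DifferentiableAt ℝ (how σ c) x) ∧
    (∀ x : ℝ, x - deriv (how σ c) x =
      max 0 (|x| - |x| * Real.exp ((c ^ 2 - x ^ 2) / σ ^ 2)) * Real.sign x) ∧
    (∀ x : ℝ,
      max 0 (|x| - |x| * Real.exp ((c ^ 2 - x ^ 2) / σ ^ 2)) * Real.sign x = 0 ↔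
      |x| ≤ c) := by
  have hderiv := hasDerivAt_how hσ.ne' hc.le
  refine ⟨fun x => (hderiv x).differentiableAt, fun x => ?_, fun x => ?_⟩
  · rw [(hderiv x).deriv, max_abs_sub_abs_mul_mul_sign, ← mul_one_sub, ← max_sub_sub_left,
      sub_self]
  · rw [max_abs_sub_abs_mul_mul_sign, mul_eq_zero, max_eq_left_iff, sub_nonpos,
      one_le_exp_iff_abs_le hσ.ne' hc.le, or_iff_right_iff_imp]
    rintro rfl
    simpa using hc.le
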